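/- Let N > 2 be an integer, p > 1, k < 0, and 0 < b ≤ π/2. Suppose U : [0, b) → ℝ is differentiable with U(0) = 0, satisfies the U-equation on (0, b), and U(x) > 0 and U'(x) > 0 for all x ∈ (0, b). Define, for x ∈ (0, b), Q(x) = ((1-p)·(2·U(x)·U'(x) + 4·(U(x)³ + U(x))·k) + 2·U(x)·(p-N) + (3·U(x)² + 1)·(2-N)·cot(x)) / ((p-1)·U(x)² + 1). If W : [0, b) → ℝ is continuous on [0, b), differentiable on (0, b), with W(0) = 0 and W'(x) = Q(x)·W(x) + (1-p)·(U(x)² + 1)²/((p-1)·U(x)² + 1) for all x ∈ (0, b), then W(x) < 0 for all x ∈ (0, b). -/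

import Mathlib

/-!
The forcing term `F = (1-p)(U²+1)²/((p-1)U²+1)` of the linear equation `W' = Q W + F` is
negative, so `W' < 0` wherever `W` vanishes: `W` can cross zero only downwards. This does not
suffice at `x = 0`, where `W` starts at zero but need not be differentiable. There one uses
that `Q → -∞` as `x → 0⁺` (because `cot x → +∞`, `N > 2` and `U(x) → 0`, while `U U' > 0`),
so near `0` the equation forces `W' < 0` wherever `W > 0`, and `W` cannot become positive.
-/

noncomputable section
open Real Set Filter Topology

/-- `U` satisfies the U-equation (for parameters `p`, `N`, `k`) on the set `I`:
`((p-1)U² + 1)U' = k(1-p)(U² + 1)² + (U² + 1)(p - N + (2-N)·U·cot x)`. -/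
def UEqOn (p : ℝ) (N : ℕ) (k : ℝ) (U : ℝ → ℝ) (I : Set ℝ) : Prop :=
  ∀ x ∈ I,
    ((p - 1) * (U x) ^ 2 + 1) * deriv U x =
      k * (1 - p) * ((U x) ^ 2 + 1) ^ 2
        + ((U x) ^ 2 + 1) * (p - (N : ℝ) + (2 - (N : ℝ)) * U x * Real.cot x)

lemma tendsto_cot_nhdsGT_zero : Tendsto cot (𝓝[>] 0) atTop := by
  have hsin : Tendsto sin (𝓝[>] 0) (𝓝[>] 0) := by
    refine tendsto_nhdsWithin_of_tendsto_nhds_of_eventually_within _ ?_ ?_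
    · simpa using (continuous_sin.tendsto 0).mono_left nhdsWithin_le_nhds
    · filter_upwards [Ioo_mem_nhdsGT pi_pos] with t ht
      exact sin_pos_of_pos_of_lt_pi ht.1 ht.2
  have hcos : Tendsto cos (𝓝[>] 0) (𝓝 1) := by
    simpa using (continuous_cos.tendsto 0).mono_left nhdsWithin_le_nhds
  refine (hcos.pos_mul_atTop one_pos hsin.inv_tendsto_nhdsGT_zero).congr fun x => ?_
  rw [cot_eq_cos_div_sin, div_eq_mul_inv, Pi.inv_apply]

section SignOfSolutions

variable {W : ℝ → ℝ} {a b : ℝ}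

lemma deriv_nonneg_of_nonpos_left {x : ℝ} (hax : a < x) (hW : ∀ t ∈ Ioo a x, W t ≤ 0)
    (hx : W x = 0) (hd : DifferentiableAt ℝ W x) : 0 ≤ deriv W x := by
  refine ge_of_tendsto (hasDerivAt_iff_tendsto_slope_left_right.1 hd.hasDerivAt).1 ?_
  filter_upwards [Ioo_mem_nhdsLT hax] with t ht
  rw [slope_def_field, hx, sub_zero]
  exact div_nonneg_of_nonpos (hW t ht) (by linarith [ht.2])

lemma nonpos_of_deriv_neg_of_pos (hc : ContinuousOn W (Ico a b)) (ha : W a ≤ 0)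
    (hneg : ∀ t ∈ Ioo a b, 0 < W t → deriv W t < 0) : ∀ x ∈ Ico a b, W x ≤ 0 := by
  intro x hx
  by_contra! hWx
  have hS : IsClosed (Icc a x ∩ W ⁻¹' Iic 0) :=
    (hc.mono (Icc_subset_Ico_right hx.2)).preimage_isClosed_of_isClosed isClosed_Icc isClosed_Iic
  -- `s` is the last point of `[a, x]` where `W ≤ 0`; on `(s, x]` `W > 0`, so `W` decreases there.
  obtain ⟨s, ⟨⟨has, hsx⟩, hWs : W s ≤ 0⟩, hsmax⟩ :=
    (isCompact_Icc.of_isClosed_subset hS inter_subset_left).exists_isGreatest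
      ⟨a, left_mem_Icc.2 hx.1, ha⟩
  have hsx : s < x := lt_of_le_of_ne hsx (by rintro rfl; linarith)
  have hpos : ∀ t ∈ Ioc s x, 0 < W t := fun t ht => by
    by_contra! h
    exact ht.1.not_ge (hsmax ⟨⟨has.trans ht.1.le, ht.2⟩, h⟩)
  have hanti : StrictAntiOn W (Icc s x) := by
    refine strictAntiOn_of_deriv_neg (convex_Icc s x)
      (hc.mono fun t ht => ⟨has.trans ht.1, ht.2.trans_lt hx.2⟩) ?_
    rw [interior_Icc]
    exact fun t ht => hneg t ⟨has.trans_lt ht.1, ht.2.trans hx.2⟩ (hpos t ⟨ht.1, ht.2.le⟩)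
  linarith [hanti ⟨le_rfl, hsx.le⟩ ⟨hsx.le, le_rfl⟩ hsx]

theorem neg_of_deriv_neg_of_eq_zero (hc : ContinuousOn W (Ico a b))
    (hd : ∀ t ∈ Ioo a b, DifferentiableAt ℝ W t) (ha : W a ≤ 0)
    (hnear : ∀ᶠ t in 𝓝[>] a, 0 < W t → deriv W t < 0)
    (hzero : ∀ t ∈ Ioo a b, W t = 0 → deriv W t < 0) : ∀ x ∈ Ioo a b, W x < 0 := by
  intro x hx
  obtain ⟨δ, ⟨haδ, hδb⟩, hδ⟩ :=
    (mem_nhdsGT_iff_exists_mem_Ioc_Ioo_subset (hx.1.trans hx.2)).1 hnear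
  have hW_near : ∀ t ∈ Ico a δ, W t ≤ 0 :=
    nonpos_of_deriv_neg_of_pos (hc.mono (Ico_subset_Ico_right hδb)) ha fun t ht => hδ ht
  have hle : ∀ t ∈ Ioo a b, W t ≤ 0 := by
    intro t ht
    set c := min t ((a + δ) / 2)
    have hac : a < c := lt_min ht.1 (by linarith)
    have hsub : Icc c t ⊆ Ioo a b := fun y hy => ⟨hac.trans_le hy.1, hy.2.trans_lt ht.2⟩
    refine image_le_of_deriv_right_lt_deriv_boundary'
      (hc.mono fun y hy => Ioo_subset_Ico_self (hsub hy))
      (fun y hy => (hd y (hsub (Ico_subset_Icc_self hy))).hasDerivAt.hasDerivWithinAt)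
      (hW_near c ⟨hac.le, (min_le_right _ _).trans_lt (by linarith)⟩) continuousOn_const
      (fun _ _ => hasDerivWithinAt_const _ _ 0)
      (fun y hy => hzero y (hsub (Ico_subset_Icc_self hy))) ⟨min_le_left _ _, le_rfl⟩
  refine (hle x hx).lt_of_ne fun h0 => (hzero x hx h0).not_ge ?_
  exact deriv_nonneg_of_nonpos_left hx.1 (fun t ht => hle t ⟨ht.1, ht.2.trans hx.2⟩) h0
    (hd x hx)

end SignOfSolutions

section VariationalEquation

variable {p k : ℝ} {N : ℕ} {U : ℝ → ℝ}

lemma sub_one_mul_sq_add_one_pos (hp : 1 < p) (u : ℝ) : 0 < (p - 1) * u ^ 2 + 1 := by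
  nlinarith [sq_nonneg u]

def coeffQ (p : ℝ) (N : ℕ) (k : ℝ) (U : ℝ → ℝ) (x : ℝ) : ℝ :=
  ((1 - p) * (2 * U x * deriv U x + 4 * ((U x) ^ 3 + U x) * k)
      + 2 * U x * (p - (N : ℝ))
      + (3 * (U x) ^ 2 + 1) * (2 - (N : ℝ)) * Real.cot x)
    / ((p - 1) * (U x) ^ 2 + 1)

def forcingTerm (p : ℝ) (U : ℝ → ℝ) (x : ℝ) : ℝ :=
  (1 - p) * ((U x) ^ 2 + 1) ^ 2 / ((p - 1) * (U x) ^ 2 + 1)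

lemma forcingTerm_neg (hp : 1 < p) (x : ℝ) : forcingTerm p U x < 0 := by
  refine div_neg_of_neg_of_pos ?_ (sub_one_mul_sq_add_one_pos hp _)
  nlinarith [pow_pos (by positivity : (0 : ℝ) < U x ^ 2 + 1) 2]

lemma eventually_coeffQ_neg (hp : 1 < p) (hN : 2 < N) (hU : Tendsto U (𝓝[>] 0) (𝓝 0))
    (hUU' : ∀ᶠ x in 𝓝[>] 0, 0 < U x * deriv U x) :
    ∀ᶠ x in 𝓝[>] 0, coeffQ p N k U x < 0 := by
  have hN' : (2 : ℝ) - N < 0 := by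
    have : (2 : ℝ) < N := by exact_mod_cast hN
    linarith
  have hlow : Tendsto (fun x => (1 - p) * (4 * (U x ^ 3 + U x) * k) + 2 * U x * (p - N))
      (𝓝[>] 0) (𝓝 0) := by
    simpa [Function.comp_def] using ((by fun_prop : Continuous fun u : ℝ =>
      (1 - p) * (4 * (u ^ 3 + u) * k) + 2 * u * (p - N)).tendsto 0).comp hU
  have hcot : Tendsto (fun x => (3 * U x ^ 2 + 1) * (2 - N) * cot x) (𝓝[>] 0) atBot := by
    refine Tendsto.neg_mul_atTop hN' ?_ tendsto_cot_nhdsGT_zero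
    simpa [Function.comp_def] using
      ((by fun_prop : Continuous fun u : ℝ => (3 * u ^ 2 + 1) * (2 - N)).tendsto 0).comp hU
  filter_upwards [(hlow.add_atBot hcot).eventually_lt_atBot 0, hUU'] with x hx hxU
  refine div_neg_of_neg_of_pos ?_ (sub_one_mul_sq_add_one_pos hp _)
  nlinarith

end VariationalEquation

theorem W_negative_general (N : ℕ) (hN : 2 < N) (p : ℝ) (hp : 1 < p) (k : ℝ)
    (b : ℝ)
    (U W : ℝ → ℝ)
    (hUd : ∀ x ∈ Ico (0 : ℝ) b, DifferentiableWithinAt ℝ U (Ici 0) x)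
    (hU0 : U 0 = 0)
    (hUpos : ∀ x ∈ Ioo (0 : ℝ) b, 0 < U x ∧ 0 < deriv U x)
    (hWc : ContinuousOn W (Ico 0 b))
    (hWd : ∀ x ∈ Ioo (0 : ℝ) b, DifferentiableAt ℝ W x)
    (hW0 : W 0 = 0)
    (hW' : ∀ x ∈ Ioo (0 : ℝ) b,
      deriv W x =
        (((1 - p) * (2 * U x * deriv U x + 4 * ((U x) ^ 3 + U x) * k)
            + 2 * U x * (p - (N : ℝ))
            + (3 * (U x) ^ 2 + 1) * (2 - (N : ℝ)) * Real.cot x)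
          / ((p - 1) * (U x) ^ 2 + 1)) * W x
        + (1 - p) * ((U x) ^ 2 + 1) ^ 2 / ((p - 1) * (U x) ^ 2 + 1)) :
    ∀ x ∈ Ioo (0 : ℝ) b, W x < 0 := by
  intro x hx
  have hb0 : 0 < b := hx.1.trans hx.2
  have hW' : ∀ t ∈ Ioo (0 : ℝ) b, deriv W t = coeffQ p N k U t * W t + forcingTerm p U t :=
    hW'
  have hb : Ioo (0 : ℝ) b ∈ 𝓝[>] 0 := Ioo_mem_nhdsGT hb0
  have hU : Tendsto U (𝓝[>] 0) (𝓝 0) := by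
    simpa [hU0] using ((hUd 0 ⟨le_rfl, hb0⟩).continuousWithinAt.mono
      Ioi_subset_Ici_self).tendsto
  have hQ := eventually_coeffQ_neg (k := k) hp hN hU <| by
    filter_upwards [hb] with t ht
    exact mul_pos (hUpos t ht).1 (hUpos t ht).2
  refine neg_of_deriv_neg_of_eq_zero hWc hWd hW0.le ?_ (fun t ht h0 => ?_) x hx
  · filter_upwards [hQ, hb] with t hQt ht hWt
    rw [hW' t ht]
    linarith [mul_neg_of_neg_of_pos hQt hWt, forcingTerm_neg (U := U) hp t]
  · rw [hW' t ht, h0, mul_zero, zero_add]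
    exact forcingTerm_neg hp t

/-- The variational function `W` (playing the role of `∂U/∂k`), solving the linear
equation `W' = Q·W + (1-p)(U²+1)²/((p-1)U²+1)` with `W(0) = 0`, is negative on `(0,b)`. -/
theorem W_negative (N : ℕ) (hN : 2 < N) (p : ℝ) (hp : 1 < p) (k : ℝ) (hk : k < 0)
    (b : ℝ) (hb0 : 0 < b) (hb : b ≤ π / 2)
    (U W : ℝ → ℝ)
    (hUd : ∀ x ∈ Ico (0 : ℝ) b, DifferentiableWithinAt ℝ U (Ici 0) x)
    (hU0 : U 0 = 0)
    (hUeq : UEqOn p N k U (Ioo 0 b))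
    (hUpos : ∀ x ∈ Ioo (0 : ℝ) b, 0 < U x ∧ 0 < deriv U x)
    (hWc : ContinuousOn W (Ico 0 b))
    (hWd : ∀ x ∈ Ioo (0 : ℝ) b, DifferentiableAt ℝ W x)
    (hW0 : W 0 = 0)
    (hW' : ∀ x ∈ Ioo (0 : ℝ) b,
      deriv W x =
        (((1 - p) * (2 * U x * deriv U x + 4 * ((U x) ^ 3 + U x) * k)
            + 2 * U x * (p - (N : ℝ))
            + (3 * (U x) ^ 2 + 1) * (2 - (N : ℝ)) * Real.cot x)
          / ((p - 1) * (U x) ^ 2 + 1)) * W x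
        + (1 - p) * ((U x) ^ 2 + 1) ^ 2 / ((p - 1) * (U x) ^ 2 + 1)) :
    ∀ x ∈ Ioo (0 : ℝ) b, W x < 0 :=
  W_negative_general N hN p hp k b U W hUd hU0 hUpos hWc hWd hW0 hW'
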